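/- arXiv:2603.26519 — 6 statements merged into one kernel-verified Lean document; each statement's English description precedes it below -/
import Mathlib

section
/- Let t_L, t_R ∈ ℂ be nonzero, N ≥ 1, and let θ = π/(N+1), ℓ ∈ {1,…,N}. Fix a square root s of t_L/t_R and set z_1 = s·e^{iθℓ}, z_2 = s·e^{-iθℓ}, E = t_R(z_1 + z_2) = 2 s t_R cos(θℓ). Define ψ_m = -(t_L/(t_R(z_1 - z_2)))·(z_1^{-m} - z_2^{-m}) for 0 ≤ m ≤ N+1. Then ψ satisfies t_R ψ_{m-1} + t_L ψ_{m+1} = E ψ_m for all 1 ≤ m ≤ N, and ψ_0 = 0 and ψ_{N+1} = 0. -/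
open Complex

/-! With `w = z⁻¹`, the sequence `w ^ m` solves `a ψ (m - 1) + b ψ (m + 1) = E ψ m` exactly when
`z` is a root of `a z ^ 2 - E z + b`; taking `z₁, z₂` with `z₁ z₂ = t_L / t_R` and `E = t_R (z₁ + z₂)`
makes both of them roots, so every combination `C (z₁⁻ᵐ - z₂⁻ᵐ)` solves the bulk equation and vanishes
at `m = 0`. The choice `θ = π / (N + 1)` makes `z₁ ^ (N + 1) = z₂ ^ (N + 1)`, which is the second
boundary condition. -/

section Recurrence

variable {K : Type*} [Field K] {a b E z z₁ z₂ : K}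

theorem inv_pow_recurrence_of_root (hz : z ≠ 0) (hroot : a * z ^ 2 + b = E * z) (k : ℕ) :
    a * z⁻¹ ^ k + b * z⁻¹ ^ (k + 2) = E * z⁻¹ ^ (k + 1) := by
  linear_combination z⁻¹ ^ (k + 2) * hroot
    - (a * z⁻¹ ^ k * (z * z⁻¹ + 1) - E * z⁻¹ ^ (k + 1)) * mul_inv_cancel₀ hz

theorem sub_inv_pow_recurrence (hz₁ : z₁ ≠ 0) (hz₂ : z₂ ≠ 0)
    (hroot₁ : a * z₁ ^ 2 + b = E * z₁) (hroot₂ : a * z₂ ^ 2 + b = E * z₂)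
    {C : K} {ψ : ℕ → K} (hψ : ∀ m, ψ m = C * (z₁⁻¹ ^ m - z₂⁻¹ ^ m)) :
    ∀ m, 1 ≤ m → a * ψ (m - 1) + b * ψ (m + 1) = E * ψ m := by
  intro m hm
  obtain ⟨k, rfl⟩ : ∃ k, m = k + 1 := ⟨m - 1, by omega⟩
  simp only [hψ, Nat.add_sub_cancel]
  linear_combination C * inv_pow_recurrence_of_root hz₁ hroot₁ k
    - C * inv_pow_recurrence_of_root hz₂ hroot₂ k

end Recurrence

theorem exp_mul_pow_eq_exp_neg_mul_pow {θ : ℝ} {n : ℕ} (h : θ * n = Real.pi) (ℓ : ℕ) :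
    exp (I * θ * ℓ) ^ n = exp (-(I * θ * ℓ)) ^ n := by
  rw [← exp_nat_mul, ← exp_nat_mul, exp_eq_exp_iff_exists_int]
  have h' : (θ : ℂ) * n = Real.pi := by exact_mod_cast h
  exact ⟨ℓ, by push_cast; linear_combination (2 * I * ℓ) * h'⟩

theorem hatano_nelson_obc_eigenstates_general
    (N : ℕ) (tL tR : ℂ) (htL : tL ≠ 0) (htR : tR ≠ 0)
    (s : ℂ) (hs : s ^ 2 = tL / tR)
    (θ : ℝ) (hθ : θ = Real.pi / (N + 1))
    (ℓ : ℕ)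
    (z₁ z₂ E : ℂ)
    (hz₁ : z₁ = s * Complex.exp (Complex.I * θ * ℓ))
    (hz₂ : z₂ = s * Complex.exp (-(Complex.I * θ * ℓ)))
    (hE : E = tR * (z₁ + z₂))
    (ψ : ℕ → ℂ)
    (hψ : ∀ m : ℕ, ψ m = -(tL / (tR * (z₁ - z₂))) * ((z₁⁻¹) ^ m - (z₂⁻¹) ^ m)) :
    (∀ m : ℕ, 1 ≤ m → m ≤ N →
      tR * ψ (m - 1) + tL * ψ (m + 1) = E * ψ m) ∧
    ψ 0 = 0 ∧ ψ (N + 1) = 0 := by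
  have hs₀ : s ≠ 0 := by
    rintro rfl
    exact div_ne_zero htL htR (by simpa using hs.symm)
  have hz₁₀ : z₁ ≠ 0 := hz₁ ▸ mul_ne_zero hs₀ (exp_ne_zero _)
  have hz₂₀ : z₂ ≠ 0 := hz₂ ▸ mul_ne_zero hs₀ (exp_ne_zero _)
  have hVieta : tL = tR * (z₁ * z₂) := by
    rw [hz₁, hz₂, mul_mul_mul_comm, ← exp_add, add_neg_cancel, exp_zero, mul_one, ← sq, hs,
      mul_div_cancel₀ _ htR]
  have hθN : θ * (N + 1 : ℕ) = Real.pi := by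
    rw [hθ]; push_cast; field_simp
  refine ⟨fun m hm _ => sub_inv_pow_recurrence hz₁₀ hz₂₀ (by rw [hE, hVieta]; ring)
    (by rw [hE, hVieta]; ring) hψ m hm, by simp [hψ], ?_⟩
  rw [hψ, inv_pow, inv_pow, hz₁, hz₂, mul_pow, mul_pow, exp_mul_pow_eq_exp_neg_mul_pow hθN,
    sub_self, mul_zero]

theorem hatano_nelson_obc_eigenstates
    (N : ℕ) (hN : 1 ≤ N) (tL tR : ℂ) (htL : tL ≠ 0) (htR : tR ≠ 0)
    (s : ℂ) (hs : s ^ 2 = tL / tR)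
    (θ : ℝ) (hθ : θ = Real.pi / (N + 1))
    (ℓ : ℕ) (hℓ₁ : 1 ≤ ℓ) (hℓ₂ : ℓ ≤ N)
    (z₁ z₂ E : ℂ)
    (hz₁ : z₁ = s * Complex.exp (Complex.I * θ * ℓ))
    (hz₂ : z₂ = s * Complex.exp (-(Complex.I * θ * ℓ)))
    (hE : E = tR * (z₁ + z₂))
    (ψ : ℕ → ℂ)
    (hψ : ∀ m : ℕ, ψ m = -(tL / (tR * (z₁ - z₂))) * ((z₁⁻¹) ^ m - (z₂⁻¹) ^ m)) :
    (∀ m : ℕ, 1 ≤ m → m ≤ N →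
      tR * ψ (m - 1) + tL * ψ (m + 1) = E * ψ m) ∧
    ψ 0 = 0 ∧ ψ (N + 1) = 0 :=
  hatano_nelson_obc_eigenstates_general N tL tR htL htR s hs θ hθ ℓ z₁ z₂ E hz₁ hz₂ hE ψ hψ
end

section
/- Let t_L, t_R, E ∈ ℂ with t_R ≠ 0, and suppose ψ : {0,…,N+1} → ℂ is a nonzero solution of t_R ψ_{n-1} + t_L ψ_{n+1} = E ψ_n (1 ≤ n ≤ N) with ψ_0 = ψ_{N+1} = 0, and suppose the roots z_1 ≠ z_2 of t_R z^2 - E z + t_L = 0 are distinct. Then z_1^{N+1} = z_2^{N+1}. -/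
theorem hatano_nelson_gbz_condition
    (N : ℕ) (tL tR E z₁ z₂ : ℂ) (htR : tR ≠ 0)
    (hz₁ : tR * z₁ ^ 2 - E * z₁ + tL = 0)
    (hz₂ : tR * z₂ ^ 2 - E * z₂ + tL = 0)
    (hne : z₁ ≠ z₂)
    (ψ : ℕ → ℂ) (h0 : ψ 0 = 0) (hNp1 : ψ (N + 1) = 0)
    (hnontriv : ∃ m : ℕ, m ≤ N + 1 ∧ ψ m ≠ 0)
    (hrec : ∀ n : ℕ, 1 ≤ n → n ≤ N →
      tR * ψ (n - 1) + tL * ψ (n + 1) = E * ψ n) :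
    z₁ ^ (N + 1) = z₂ ^ (N + 1) := by
  have hsub : z₁ - z₂ ≠ 0 := sub_ne_zero.mpr hne
  -- E = tR (z₁ + z₂)
  have hE : E = tR * (z₁ + z₂) := by
    have h : (z₁ - z₂) * (E - tR * (z₁ + z₂)) = 0 := by
      linear_combination hz₂ - hz₁
    rcases mul_eq_zero.mp h with h | h
    · exact absurd h hsub
    · exact sub_eq_zero.mp h
  -- tL = tR z₁ z₂
  have htL : tL = tR * (z₁ * z₂) := by
    linear_combination hz₁ + z₁ * hE
  by_cases htL0 : tL = 0
  · -- degenerate case: contradiction with nontriviality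
    exfalso
    have hE0 : E ≠ 0 := by
      intro hE0
      have h1 : z₁ = 0 := by
        have : tR * z₁ ^ 2 = 0 := by linear_combination hz₁ - htL0 + z₁ * hE0
        have := (mul_eq_zero.mp this).resolve_left htR
        exact pow_eq_zero_iff (n := 2) (by norm_num) |>.mp this
      have h2 : z₂ = 0 := by
        have : tR * z₂ ^ 2 = 0 := by linear_combination hz₂ - htL0 + z₂ * hE0
        have := (mul_eq_zero.mp this).resolve_left htR
        exact pow_eq_zero_iff (n := 2) (by norm_num) |>.mp this
      exact hne (h1.trans h2.symm)
    have hzero : ∀ n, n ≤ N → ψ n = 0 := by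
      intro n hn
      induction n with
      | zero => exact h0
      | succ k ih =>
        have hk := hrec (k + 1) (by omega) hn
        simp only [Nat.add_sub_cancel, htL0, zero_mul, add_zero] at hk
        have hψk : ψ k = 0 := ih (by omega)
        have : E * ψ (k + 1) = 0 := by rw [← hk, hψk]; ring
        exact (mul_eq_zero.mp this).resolve_left hE0
    obtain ⟨m, hm, hψm⟩ := hnontriv
    rcases Nat.lt_or_ge m (N + 1) with h | h
    · exact hψm (hzero m (by omega))
    · exact hψm (by rw [show m = N + 1 by omega]; exact hNp1)
  · have hz₁0 : z₁ ≠ 0 := by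
      intro h; apply htL0; rw [htL, h]; ring
    have hz₂0 : z₂ ≠ 0 := by
      intro h; apply htL0; rw [htL, h]; ring
    -- main claim
    have claim : ∀ n, n ≤ N + 1 →
        ψ n * (z₁ * z₂) ^ n * (z₂ - z₁) = ψ 1 * (z₁ * z₂) * (z₂ ^ n - z₁ ^ n) := by
      intro n
      induction n using Nat.strong_induction_on with
      | _ n ih =>
        match n with
        | 0 => intro _; simp [h0]
        | 1 => intro _; ring
        | (k + 2) =>
          intro hk
          have IH0 := ih k (by omega) (by omega)
          have IH1 := ih (k + 1) (by omega) (by omega)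
          have hr := hrec (k + 1) (by omega) (by omega)
          simp only [Nat.add_sub_cancel] at hr
          have hrel : tR * (ψ k + z₁ * z₂ * ψ (k + 2) - (z₁ + z₂) * ψ (k + 1)) = 0 := by
            linear_combination hr - ψ (k + 2) * htL + ψ (k + 1) * hE
          have hrel2 : ψ k + z₁ * z₂ * ψ (k + 2) - (z₁ + z₂) * ψ (k + 1) = 0 :=
            (mul_eq_zero.mp hrel).resolve_left htR
          linear_combination (z₁ * z₂) ^ (k + 1) * (z₂ - z₁) * hrel2 +
            (z₁ + z₂) * IH1 - (z₁ * z₂) * IH0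
    -- ψ 1 ≠ 0
    have hψ1 : ψ 1 ≠ 0 := by
      intro hψ1
      obtain ⟨m, hm, hψm⟩ := hnontriv
      have := claim m hm
      rw [hψ1] at this
      simp only [zero_mul] at this
      have : ψ m * (z₁ * z₂) ^ m * (z₂ - z₁) = 0 := this
      rcases mul_eq_zero.mp this with h | h
      · rcases mul_eq_zero.mp h with h | h
        · exact hψm h
        · exact (pow_ne_zero m (mul_ne_zero hz₁0 hz₂0)) h
      · exact hsub (by linear_combination -h)
    have hfin := claim (N + 1) le_rfl
    rw [hNp1] at hfin
    simp only [zero_mul] at hfin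
    have : z₂ ^ (N + 1) - z₁ ^ (N + 1) = 0 := by
      have h := hfin.symm
      rcases mul_eq_zero.mp h with h | h
      · exact absurd h (mul_ne_zero hψ1 (mul_ne_zero hz₁0 hz₂0))
      · exact h
    linear_combination -this
end

section
/- Let t_L, t_R, E ∈ ℂ and let ψ : ℤ → ℂ be N-periodic (ψ_{n+N} = ψ_n) satisfying t_R ψ_{n-1} + t_L ψ_{n+1} = E ψ_n for all n. Define G(z) = ∑_{m=1}^{N} ψ_m z^m. Then (t_R z^2 - E z + t_L)·G(z) = z·(t_L ψ_1 - z t_R ψ_N)·(1 - z^N) as polynomials in ℂ[z]. -/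
/-!
Multiplying the generating function by the symbol `t_R z² - E z + t_L` of the hopping
operator, the recurrence cancels every interior coefficient: the product of the symbol with the
`m`-th monomial is the difference `J m - J (m + 1)` of consecutive boundary terms
`J m = t_L ψ_m z^m - t_R ψ_{m-1} z^{m+1}`, so the sum over `1 ≤ m ≤ N` telescopes to
`J 1 - J (N + 1)`, and periodicity (`ψ_0 = ψ_N`, `ψ_{N+1} = ψ_1`) factors out `1 - z^N`.
-/

open Polynomial

namespace HatanoNelson

variable {R : Type*} [CommRing R]

noncomputable def boundaryTerm (tL tR : R) (ψ : ℤ → R) (m : ℕ) : R[X] :=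
  C tL * C (ψ m) * X ^ m - C tR * C (ψ (m - 1)) * X ^ (m + 1)

theorem symbol_mul_monomial_eq_sub {tL tR E : R} {ψ : ℤ → R} (m : ℕ)
    (hrec : tR * ψ (m - 1) + tL * ψ (m + 1) = E * ψ m) :
    (C tR * X ^ 2 - C E * X + C tL) * (C (ψ m) * X ^ m)
      = boundaryTerm tL tR ψ m - boundaryTerm tL tR ψ (m + 1) := by
  have hE : C E * C (ψ m) = C tR * C (ψ (m - 1)) + C tL * C (ψ (m + 1)) := by
    simp only [← C_mul, ← C_add, hrec]
  simp only [boundaryTerm, Nat.cast_succ, add_sub_cancel_right]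
  linear_combination -(X ^ (m + 1) : R[X]) * hE

theorem symbol_mul_sum_Icc_eq_sub {tL tR E : R} {ψ : ℤ → R}
    (hrec : ∀ n : ℤ, tR * ψ (n - 1) + tL * ψ (n + 1) = E * ψ n) (N : ℕ) :
    (C tR * X ^ 2 - C E * X + C tL) * (∑ m ∈ Finset.Icc 1 N, C (ψ m) * X ^ m)
      = boundaryTerm tL tR ψ 1 - boundaryTerm tL tR ψ (N + 1) := by
  induction N with
  | zero => simp
  | succ N ih =>
    rw [Finset.sum_Icc_succ_top (Nat.le_add_left 1 N), mul_add, ih,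
      symbol_mul_monomial_eq_sub (N + 1) (hrec _)]
    ring

end HatanoNelson

theorem hatano_nelson_pbc_generating_function_general
    (N : ℕ) (tL tR E : ℂ) (ψ : ℤ → ℂ)
    (hper : ∀ n : ℤ, ψ (n + N) = ψ n)
    (hrec : ∀ n : ℤ, tR * ψ (n - 1) + tL * ψ (n + 1) = E * ψ n) :
    (C tR * X ^ 2 - C E * X + C tL) *
        (∑ m ∈ Finset.Icc 1 N, C (ψ (m : ℤ)) * X ^ m)
      = X * (C tL * C (ψ 1) - X * C tR * C (ψ (N : ℤ))) * (1 - X ^ N) := by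
  have hψ0 : ψ 0 = ψ N := by simpa using (hper 0).symm
  have hψN1 : ψ (N + 1) = ψ 1 := by simpa [add_comm] using hper 1
  rw [HatanoNelson.symbol_mul_sum_Icc_eq_sub hrec N]
  simp only [HatanoNelson.boundaryTerm, Nat.cast_one, sub_self, Nat.cast_add,
    add_sub_cancel_right, hψ0, hψN1]
  ring

theorem hatano_nelson_pbc_generating_function
    (N : ℕ) (hN : 1 ≤ N) (tL tR E : ℂ) (ψ : ℤ → ℂ)
    (hper : ∀ n : ℤ, ψ (n + N) = ψ n)
    (hrec : ∀ n : ℤ, tR * ψ (n - 1) + tL * ψ (n + 1) = E * ψ n) :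
    (C tR * X ^ 2 - C E * X + C tL) *
        (∑ m ∈ Finset.Icc 1 N, C (ψ (m : ℤ)) * X ^ m)
      = X * (C tL * C (ψ 1) - X * C tR * C (ψ (N : ℤ))) * (1 - X ^ N) :=
  hatano_nelson_pbc_generating_function_general N tL tR E ψ hper hrec
end

section
/- Let t_L, t_R, E, V ∈ ℂ and 1 ≤ N_1 ≤ N. Suppose ψ : {0,…,N+1} → ℂ satisfies ψ_0 = ψ_{N+1} = 0 and t_R ψ_{n-1} + t_L ψ_{n+1} + V δ_{n,N_1} ψ_n = E ψ_n for all 1 ≤ n ≤ N. Define G(z) = ∑_{m=1}^{N} ψ_m z^m. Then (t_R z^2 - E z + t_L)·G(z) = z·(t_L ψ_1 + t_R ψ_N z^{N+1} - V ψ_{N_1} z^{N_1}) in ℂ[z]. -/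
open Polynomial

theorem hatano_nelson_impurity_generating_function
    (N N₁ : ℕ) (hN₁ : 1 ≤ N₁) (hN₁N : N₁ ≤ N)
    (tL tR E V : ℂ) (ψ : ℕ → ℂ)
    (h0 : ψ 0 = 0) (hNp1 : ψ (N + 1) = 0)
    (hrec : ∀ n : ℕ, 1 ≤ n → n ≤ N →
      tR * ψ (n - 1) + tL * ψ (n + 1) + V * (if n = N₁ then 1 else 0) * ψ n
        = E * ψ n) :
    (C tR * X ^ 2 - C E * X + C tL) *
        (∑ m ∈ Finset.Icc 1 N, C (ψ m) * X ^ m)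
      = X * (C tL * C (ψ 1) + C tR * C (ψ N) * X ^ (N + 1)
              - C V * C (ψ N₁) * X ^ N₁) := by
  set f : ℕ → ℂ[X] := fun m => C tR * C (ψ m) * X ^ (m + 2) with hf
  set g : ℕ → ℂ[X] := fun m => C tL * C (ψ m) * X ^ m with hg
  have key : ∀ m ∈ Finset.Icc 1 N,
      (C tR * X ^ 2 - C E * X + C tL) * (C (ψ m) * X ^ m)
        = (f m - f (m - 1))
          + (g m - g (m + 1))
          - (if m = N₁ then C V * C (ψ N₁) * X ^ (N₁ + 1) else 0) := by
    intro m hm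
    obtain ⟨h1, h2⟩ := Finset.mem_Icc.mp hm
    have h := hrec m h1 h2
    obtain ⟨k, rfl⟩ := Nat.exists_eq_add_of_le h1
    simp only [hf, hg, Nat.add_sub_cancel_left]
    by_cases hmN : 1 + k = N₁
    · subst hmN
      simp only [eq_self_iff_true, if_true] at h ⊢
      have h' := congrArg C h
      simp only [Nat.add_sub_cancel_left, map_add, map_mul, map_one] at h'
      linear_combination (X : ℂ[X]) ^ (1 + k + 1) * h'
    · simp only [if_neg hmN] at h ⊢
      have h' := congrArg C h
      simp only [Nat.add_sub_cancel_left, map_add, map_mul, map_zero] at h'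
      linear_combination (X : ℂ[X]) ^ (1 + k + 1) * h'
  rw [Finset.mul_sum, Finset.sum_congr rfl key]
  rw [Finset.sum_sub_distrib, Finset.sum_add_distrib]
  rw [Finset.sum_ite_eq' (Finset.Icc 1 N) N₁, if_pos (Finset.mem_Icc.mpr ⟨hN₁, hN₁N⟩)]
  have e1 : ∀ (F : ℕ → ℂ[X]) (n : ℕ),
      ∑ m ∈ Finset.Icc 1 n, (F m - F (m - 1)) = F n - F 0 := by
    intro F n
    induction n with
    | zero => simp
    | succ n ih =>
      rw [Finset.sum_Icc_succ_top (by omega), ih, Nat.add_sub_cancel]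
      ring
  have e2 : ∀ (G : ℕ → ℂ[X]) (n : ℕ),
      ∑ m ∈ Finset.Icc 1 n, (G m - G (m + 1)) = G 1 - G (n + 1) := by
    intro G n
    induction n with
    | zero => simp
    | succ n ih =>
      rw [Finset.sum_Icc_succ_top (by omega), ih]
      ring
  rw [e1 f N, e2 g N]
  simp only [hf, hg, h0, hNp1, map_zero]
  ring
end

section
/- Let t_L, t_R, t'_L, t'_R, E ∈ ℂ and N ≥ 1. Suppose ψ_A, ψ_B : {1,…,N} → ℂ (with the conventions ψ_{A,N+1} and ψ_{B,0} determined by boundary conditions ψ_{B,0} = 0, ψ_{A,N+1} = 0) satisfy the bulk relations t_R ψ_{A,n} + t'_L ψ_{A,n+1} = E ψ_{B,n} for 1 ≤ n ≤ N (with ψ_{A,N+1} = 0) and t'_R ψ_{B,n} + t_L ψ_{B,n+1} = E ψ_{A,n+1} for 0 ≤ n ≤ N−1 (with ψ_{B,0} = 0). Define G_A(z) = ∑_{m=1}^N ψ_{A,m} z^m and G_B(z) = ∑_{m=1}^N ψ_{B,m} z^m. Then [(t_R z + t'_L)(t'_R z + t_L) − E² z]·G_A(z) = t'_L ψ_{A,1}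 z (t'_R z + t_L) + t'_R E ψ_{B,N} z^{N+2} in ℂ[z]. -/
open Polynomial

lemma sum_Icc_one_eq_sum_range {M : Type*} [AddCommMonoid M] (N : ℕ) (f : ℕ → M) :
    ∑ m ∈ Finset.Icc 1 N, f m = ∑ i ∈ Finset.range N, f (1 + i) := by
  induction N with
  | zero => simp
  | succ n ih =>
      rw [Finset.sum_Icc_succ_top (by omega : 1 ≤ n + 1), ih, Finset.sum_range_succ,
        add_comm 1 n]

theorem ssh_generating_function_A
    (N : ℕ) (hN : 1 ≤ N) (tL tR tL' tR' E : ℂ)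
    (ψA ψB : ℕ → ℂ)
    (hB0 : ψB 0 = 0) (hANp1 : ψA (N + 1) = 0)
    (hrec1 : ∀ n : ℕ, 1 ≤ n → n ≤ N →
      tR * ψA n + tL' * ψA (n + 1) = E * ψB n)
    (hrec2 : ∀ n : ℕ, n ≤ N - 1 →
      tR' * ψB n + tL * ψB (n + 1) = E * ψA (n + 1)) :
    ((C tR * X + C tL') * (C tR' * X + C tL) - C E ^ 2 * X) *
        (∑ m ∈ Finset.Icc 1 N, C (ψA m) * X ^ m)
      = C tL' * C (ψA 1) * X * (C tR' * X + C tL)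
        + C tR' * C E * C (ψB N) * X ^ (N + 2) := by
  set GA : Polynomial ℂ := ∑ m ∈ Finset.Icc 1 N, C (ψA m) * X ^ m with hGA
  set GB : Polynomial ℂ := ∑ m ∈ Finset.Icc 1 N, C (ψB m) * X ^ m with hGB
  have hGA' : GA = ∑ i ∈ Finset.range N, C (ψA (1 + i)) * X ^ (1 + i) := by
    rw [hGA, sum_Icc_one_eq_sum_range]
  have hGB' : GB = ∑ i ∈ Finset.range N, C (ψB (1 + i)) * X ^ (1 + i) := by
    rw [hGB, sum_Icc_one_eq_sum_range]
  -- shifted A-sum: ∑_{i<N} ψA(2+i) X^(2+i) = GA - ψA1 X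
  have hSA : ∑ i ∈ Finset.range N, C (ψA (2 + i)) * X ^ (2 + i)
      = GA - C (ψA 1) * X := by
    have h1 := Finset.sum_range_succ (fun i => C (ψA (1 + i)) * X ^ (1 + i)) N
    have h2 := Finset.sum_range_succ' (fun i => C (ψA (1 + i)) * X ^ (1 + i)) N
    have hlast : C (ψA (1 + N)) * X ^ (1 + N) = 0 := by
      rw [add_comm 1 N, hANp1]; simp
    have key : (∑ i ∈ Finset.range N, C (ψA (1 + (i + 1))) * X ^ (1 + (i + 1)))
        + C (ψA (1 + 0)) * X ^ (1 + 0) = GA := by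
      rw [← h2, h1, ← hGA', hlast, add_zero]
    have hconv : ∀ i ∈ Finset.range N, C (ψA (1 + (i + 1))) * X ^ (1 + (i + 1))
        = C (ψA (2 + i)) * X ^ (2 + i) := by
      intro i _
      have h12 : 1 + (i + 1) = 2 + i := by omega
      rw [h12]
    rw [Finset.sum_congr rfl hconv] at key
    norm_num at key
    linear_combination key
  -- shifted B-sum: ∑_{i<N} ψB i X^(i+1) = X * GB - ψB N X^(N+1)
  have hSB : ∑ i ∈ Finset.range N, C (ψB i) * X ^ (i + 1)
      = X * GB - C (ψB N) * X ^ (N + 1) := by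
    have h1 := Finset.sum_range_succ (fun i => C (ψB i) * X ^ (i + 1)) N
    have h2 := Finset.sum_range_succ' (fun i => C (ψB i) * X ^ (i + 1)) N
    have hXGB : X * GB = ∑ i ∈ Finset.range N, C (ψB (i + 1)) * X ^ (i + 1 + 1) := by
      rw [hGB', Finset.mul_sum]
      refine Finset.sum_congr rfl fun i _ => ?_
      rw [add_comm 1 i]; ring
    have h0 : C (ψB 0) * X ^ (0 + 1) = 0 := by rw [hB0]; simp
    have : ∑ i ∈ Finset.range (N + 1), C (ψB i) * X ^ (i + 1)
        = X * GB := by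
      rw [h2, hXGB, h0, add_zero]
    rw [h1] at this
    linear_combination this
  -- equation 1: (tR X + tL') GA = tL' ψA1 X + E X GB
  have eq1 : (C tR * X + C tL') * GA = C tL' * C (ψA 1) * X + C E * X * GB := by
    have step : ∑ i ∈ Finset.range N,
        (C tR * C (ψA (1 + i)) + C tL' * C (ψA (2 + i))) * X ^ (2 + i)
        = ∑ i ∈ Finset.range N, C E * C (ψB (1 + i)) * X ^ (2 + i) := by
      refine Finset.sum_congr rfl fun i hi => ?_
      rw [Finset.mem_range] at hi
      have h := hrec1 (1 + i) (by omega) (by omega)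
      have : (1 + i) + 1 = 2 + i := by omega
      rw [this] at h
      rw [← C_mul, ← C_mul, ← C_add, ← C_mul, h]
    have lhs_split : ∑ i ∈ Finset.range N,
        (C tR * C (ψA (1 + i)) + C tL' * C (ψA (2 + i))) * X ^ (2 + i)
        = C tR * X * GA + C tL' * (GA - C (ψA 1) * X) := by
      rw [← hSA, hGA', Finset.mul_sum, Finset.mul_sum, ← Finset.sum_add_distrib]
      refine Finset.sum_congr rfl fun i _ => ?_
      have : (2 : ℕ) + i = (1 + i) + 1 := by omega
      rw [this, pow_succ]
      ring
    have rhs_eq : ∑ i ∈ Finset.range N, C E * C (ψB (1 + i)) * X ^ (2 + i)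
        = C E * X * GB := by
      rw [hGB', Finset.mul_sum]
      refine Finset.sum_congr rfl fun i _ => ?_
      have : (2 : ℕ) + i = (1 + i) + 1 := by omega
      rw [this, pow_succ]
      ring
    rw [lhs_split, rhs_eq] at step
    linear_combination step
  -- equation 2: (tR' X + tL) GB = E GA + tR' ψB_N X^(N+1)
  have eq2 : (C tR' * X + C tL) * GB = C E * GA + C tR' * C (ψB N) * X ^ (N + 1) := by
    have step : ∑ i ∈ Finset.range N,
        (C tR' * C (ψB i) + C tL * C (ψB (i + 1))) * X ^ (i + 1)
        = ∑ i ∈ Finset.range N, C E * C (ψA (i + 1)) * X ^ (i + 1) := by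
      refine Finset.sum_congr rfl fun i hi => ?_
      rw [Finset.mem_range] at hi
      have h := hrec2 i (by omega)
      rw [← C_mul, ← C_mul, ← C_add, ← C_mul, h]
    have lhs_split : ∑ i ∈ Finset.range N,
        (C tR' * C (ψB i) + C tL * C (ψB (i + 1))) * X ^ (i + 1)
        = C tR' * (X * GB - C (ψB N) * X ^ (N + 1)) + C tL * GB := by
      rw [← hSB, hGB', Finset.mul_sum, Finset.mul_sum, ← Finset.sum_add_distrib]
      refine Finset.sum_congr rfl fun i _ => ?_
      rw [add_comm 1 i]
      ring
    have rhs_eq : ∑ i ∈ Finset.range N, C E * C (ψA (i + 1)) * X ^ (i + 1)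
        = C E * GA := by
      rw [hGA', Finset.mul_sum]
      refine Finset.sum_congr rfl fun i _ => ?_
      rw [add_comm 1 i]; ring
    rw [lhs_split, rhs_eq] at step
    linear_combination step
  linear_combination (C tR' * X + C tL) * eq1 + C E * X * eq2
end

section
/- Under the same hypotheses as the non-Hermitian SSH generating-function setup, the B-sublattice generating function satisfies [(t_R z + t'_L)(t'_R z + t_L) − E² z]·G_B(z) = t'_L E ψ_{A,1} z + t'_R ψ_{B,N} z^{N+1}(t_R z + t'_L) in ℂ[z]. -/
open Polynomial

set_option maxHeartbeats 1600000

theorem ssh_generating_function_B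
    (N : ℕ) (hN : 1 ≤ N) (tL tR tL' tR' E : ℂ)
    (ψA ψB : ℕ → ℂ)
    (hB0 : ψB 0 = 0) (hANp1 : ψA (N + 1) = 0)
    (hrec1 : ∀ n : ℕ, 1 ≤ n → n ≤ N →
      tR * ψA n + tL' * ψA (n + 1) = E * ψB n)
    (hrec2 : ∀ n : ℕ, n ≤ N - 1 →
      tR' * ψB n + tL * ψB (n + 1) = E * ψA (n + 1)) :
    ((C tR * X + C tL') * (C tR' * X + C tL) - C E ^ 2 * X) *
        (∑ m ∈ Finset.Icc 1 N, C (ψB m) * X ^ m)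
      = C tL' * C E * C (ψA 1) * X
        + C tR' * C (ψB N) * X ^ (N + 1) * (C tR * X + C tL') := by
  have h1 : tL * ψB 1 = E * ψA 1 := by
    have := hrec2 0 (by omega)
    simpa [hB0] using this
  have hNend : tR * tR' * ψB (N - 1) + tR * tL * ψB N = E ^ 2 * ψB N := by
    have hA := hrec1 N hN le_rfl
    have hB := hrec2 (N - 1) (by omega)
    rw [Nat.sub_add_cancel hN] at hB
    rw [hANp1] at hA
    linear_combination tR * hB + E * hA
  have hmid : ∀ n : ℕ, 1 ≤ n → n ≤ N - 1 →
      tR * tR' * ψB (n - 1) + (tR * tL + tL' * tR') * ψB n + tL * tL' * ψB (n + 1)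
        = E ^ 2 * ψB n := by
    intro n h1n h2n
    have hA := hrec1 n h1n (by omega)
    have hB1 := hrec2 (n - 1) (by omega)
    rw [Nat.sub_add_cancel h1n] at hB1
    have hB2 := hrec2 n h2n
    linear_combination tR * hB1 + tL' * hB2 + E * hA
  set G : ℂ[X] := ∑ m ∈ Finset.Icc 1 N, C (ψB m) * X ^ m with hG
  have hGc : ∀ j : ℕ, G.coeff j = if j ∈ Finset.Icc 1 N then ψB j else 0 := by
    intro j
    rw [hG, Polynomial.finset_sum_coeff]
    simp only [coeff_C_mul, coeff_X_pow, mul_ite, mul_one, mul_zero]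
    rw [Finset.sum_ite_eq (Finset.Icc 1 N) j ψB]
  have hexp : ((C tR * X + C tL') * (C tR' * X + C tL) - C E ^ 2 * X) * G
      = (C (tR * tR') * G) * X ^ 2 + (C (tR * tL + tL' * tR' - E ^ 2) * G) * X ^ 1
        + C (tL * tL') * G := by
    simp only [C_mul, C_add, C_sub, C_pow]
    ring
  have hrhs : C tL' * C E * C (ψA 1) * X
        + C tR' * C (ψB N) * X ^ (N + 1) * (C tR * X + C tL')
      = C (tL' * E * ψA 1) * X ^ 1 + C (tR' * ψB N * tL') * X ^ (N + 1)
        + C (tR' * ψB N * tR) * X ^ (N + 2) := by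
    simp only [C_mul]
    ring
  rw [hexp, hrhs]
  apply Polynomial.ext
  intro k
  simp only [coeff_add, coeff_mul_X_pow', coeff_C_mul, coeff_X_pow, hGc,
    Finset.mem_Icc, mul_ite, mul_one, mul_zero]
  simp only [coeff_C] at *
  have hcase : k = 0 ∨ k = 1 ∨ (2 ≤ k ∧ k ≤ N) ∨ k = N + 1 ∨ k = N + 2 ∨ N + 3 ≤ k := by
    omega
  rcases hcase with rfl | rfl | ⟨hk2, hkN⟩ | rfl | rfl | hk3
  · split_ifs <;> first | (exfalso; omega) | ring1
  · split_ifs <;>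
      first
        | (exfalso; omega)
        | ring1
        | linear_combination tL' * h1
  · have hm := hmid (k - 1) (by omega) (by omega)
    rw [show k - 1 - 1 = k - 2 from by omega, show k - 1 + 1 = k from by omega] at hm
    split_ifs <;>
      first
        | (exfalso; omega)
        | linear_combination hm
        | (rw [show k - 2 = 0 from by omega, hB0] at hm; linear_combination hm)
  · rw [show N + 1 - 2 = N - 1 from by omega, show N + 1 - 1 = N from by omega]
    split_ifs <;>
      first
        | (exfalso; omega)
        | linear_combination hNend
        | (rw [show N - 1 = 0 from by omega, hB0] at hNend; linear_combination hNend)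
  · rw [show N + 2 - 2 = N from by omega]
    split_ifs <;> first | (exfalso; omega) | ring1
  · split_ifs <;> first | (exfalso; omega) | ring1
end
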